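/- For the Freund submanifold F₃ (β₁=β₂=α₁+α₂) with density f(x,y)=α₁(α₁+α₂)e^{-(α₁+α₂)y} on 0<x<y and α₂(α₁+α₂)e^{-(α₁+α₂)x} on 0<y<x, the covariance is Cov(X,Y) = (α₁²+α₁α₂+α₂²)/(α₁+α₂)⁴, which is strictly positive. -/

import Mathlib

open MeasureTheory Real

/-- Density of the Freund submanifold `F₃` (`β₁ = β₂ = α₁ + α₂`). -/
noncomputable def freundF3 (a1 a2 : ℝ) (x y : ℝ) : ℝ :=
  if 0 < x ∧ x < y then a1 * (a1 + a2) * Real.exp (-(a1 + a2) * y)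
  else if 0 < y ∧ y < x then a2 * (a1 + a2) * Real.exp (-(a1 + a2) * x)
  else 0

/-- Expectation of `φ(x,y)` under the `F₃` density. -/
noncomputable def f3E (a1 a2 : ℝ) (φ : ℝ → ℝ → ℝ) : ℝ :=
  ∫ x in Set.Ioi (0:ℝ), ∫ y in Set.Ioi (0:ℝ), φ x y * freundF3 a1 a2 x y

/-- Covariance of `X` and `Y` under the `F₃` density. -/
noncomputable def f3Cov (a1 a2 : ℝ) : ℝ :=
  f3E a1 a2 (fun x y => x * y) - f3E a1 a2 (fun x _ => x) * f3E a1 a2 (fun _ y => y)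

/-!
For fixed `x > 0` the density in `y` is the constant `α₂ s e^{-s x}` on `(0, x)` and
`α₁ s e^{-s y}` on `(x, ∞)`, where `s = α₁ + α₂`. Hence the inner integrals of `1` and `y` are
polynomials in `x` times `e^{-s x}`, and the outer integrals reduce to the Gamma integrals
`∫₀^∞ xⁿ e^{-s x} dx = n! / s^{n+1}`. This gives `E X = (α₁ + 2α₂)/s²`, `E Y = (2α₁ + α₂)/s²` and
`E XY = 3/s²`, whence `Cov(X, Y) = (3s² - (α₁ + 2α₂)(2α₁ + α₂))/s⁴ = (α₁² + α₁α₂ + α₂²)/s⁴`.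
-/

open Set Filter Topology
open scoped Nat

namespace Real

theorem integral_Ioi_pow_mul_exp_neg_mul {s : ℝ} (hs : 0 < s) (n : ℕ) :
    ∫ x in Ioi 0, x ^ n * exp (-s * x) = n ! / s ^ (n + 1) := by
  have h := integral_rpow_mul_exp_neg_mul_Ioi (a := n + 1) (by positivity) hs
  rw [Gamma_nat_eq_factorial, one_div, inv_rpow hs.le, ← Nat.cast_add_one, rpow_natCast] at h
  rw [div_eq_inv_mul, ← h]
  refine setIntegral_congr_fun measurableSet_Ioi fun x _ => ?_
  simp [neg_mul, ← rpow_natCast]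

theorem integrableOn_Ioi_pow_mul_exp_neg_mul {s : ℝ} (hs : 0 < s) (n : ℕ) :
    IntegrableOn (fun x => x ^ n * exp (-s * x)) (Ioi 0) :=
  Integrable.of_integral_ne_zero <| by
    rw [integral_Ioi_pow_mul_exp_neg_mul hs n]; positivity

theorem integral_Ioi_cubic_mul_exp_neg_mul {s : ℝ} (hs : 0 < s) (c₀ c₁ c₂ c₃ : ℝ) :
    ∫ x in Ioi 0, (c₀ + c₁ * x + c₂ * x ^ 2 + c₃ * x ^ 3) * exp (-s * x) =
      c₀ / s + c₁ / s ^ 2 + 2 * c₂ / s ^ 3 + 6 * c₃ / s ^ 4 := by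
  have hint (n : ℕ) (c : ℝ) := (integrableOn_Ioi_pow_mul_exp_neg_mul hs n).const_mul c
  have hmom (n : ℕ) (c : ℝ) : ∫ x in Ioi 0, c * (x ^ n * exp (-s * x)) = c * n ! / s ^ (n + 1) := by
    rw [integral_const_mul, integral_Ioi_pow_mul_exp_neg_mul hs, mul_div_assoc]
  calc ∫ x in Ioi 0, (c₀ + c₁ * x + c₂ * x ^ 2 + c₃ * x ^ 3) * exp (-s * x)
      = ∫ x in Ioi 0, (c₀ * (x ^ 0 * exp (-s * x)) + c₁ * (x ^ 1 * exp (-s * x))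
          + c₂ * (x ^ 2 * exp (-s * x)) + c₃ * (x ^ 3 * exp (-s * x))) := by
        congr 1 with x; ring
    _ = c₀ * 0 ! / s ^ 1 + c₁ * 1 ! / s ^ 2 + c₂ * 2 ! / s ^ 3 + c₃ * 3 ! / s ^ 4 := by
        rw [integral_add _ (hint 3 c₃), integral_add _ (hint 2 c₂),
          integral_add (hint 0 c₀) (hint 1 c₁), hmom, hmom, hmom, hmom]
        · exact (hint 0 c₀).add (hint 1 c₁)
        · exact ((hint 0 c₀).add (hint 1 c₁)).add (hint 2 c₂)
    _ = c₀ / s + c₁ / s ^ 2 + 2 * c₂ / s ^ 3 + 6 * c₃ / s ^ 4 := by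
        simp [Nat.factorial]; ring

theorem integrableOn_Ioi_mul_exp_neg_mul {s c : ℝ} (hs : 0 < s) (hc : 0 ≤ c) :
    IntegrableOn (fun y => y * exp (-s * y)) (Ioi c) := by
  simpa using (integrableOn_Ioi_pow_mul_exp_neg_mul hs 1).mono_set (Ioi_subset_Ioi hc)

theorem integral_Ioi_mul_exp_neg_mul {s c : ℝ} (hs : 0 < s) (hc : 0 ≤ c) :
    ∫ y in Ioi c, y * exp (-s * y) = (c / s + 1 / s ^ 2) * exp (-s * c) := by
  have hderiv (y : ℝ) : HasDerivAt (fun y => -(y / s + 1 / s ^ 2) * exp (-s * y))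
      (y * exp (-s * y)) y := by
    have := (((hasDerivAt_id' y).div_const s).add_const (1 / s ^ 2)).neg.mul
      (((hasDerivAt_id' y).const_mul (-s)).exp)
    exact this.congr_deriv (by simp only [Pi.neg_apply]; field_simp; ring)
  have hlim : Tendsto (fun y => -(y / s + 1 / s ^ 2) * exp (-s * y)) atTop (𝓝 0) := by
    have h1 := tendsto_rpow_mul_exp_neg_mul_atTop_nhds_zero 1 s hs
    have h0 := tendsto_rpow_mul_exp_neg_mul_atTop_nhds_zero 0 s hs
    convert ((h1.const_mul (-1 / s)).add (h0.const_mul (-1 / s ^ 2))) using 2 with y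
    · simp only [rpow_one, rpow_zero]; ring
    · simp
  rw [integral_Ioi_of_hasDerivAt_of_tendsto' (fun y _ => hderiv y)
    (integrableOn_Ioi_mul_exp_neg_mul hs hc) hlim]
  ring

end Real

section

variable {a1 a2 : ℝ}

theorem integral_Ioi_mul_freundF3 {x : ℝ} (hx : 0 < x) {g : ℝ → ℝ}
    (hg₁ : IntegrableOn g (Ioo 0 x))
    (hg₂ : IntegrableOn (fun y => g y * exp (-(a1 + a2) * y)) (Ioi x)) :
    ∫ y in Ioi 0, g y * freundF3 a1 a2 x y =
      a2 * (a1 + a2) * exp (-(a1 + a2) * x) * (∫ y in Ioo 0 x, g y) +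
        a1 * (a1 + a2) * ∫ y in Ioi x, g y * exp (-(a1 + a2) * y) := by
  have hbelow : EqOn (fun y => g y * freundF3 a1 a2 x y)
      (fun y => a2 * (a1 + a2) * exp (-(a1 + a2) * x) * g y) (Ioo 0 x) := by
    rintro y ⟨hy, hyx⟩
    simp only [freundF3, hyx.not_gt, and_false, hy, hyx, and_self, if_false, if_true]
    ring
  have habove : EqOn (fun y => g y * freundF3 a1 a2 x y)
      (fun y => a1 * (a1 + a2) * (g y * exp (-(a1 + a2) * y))) (Ioi x) := by
    intro y hxy
    simp only [freundF3, hx, mem_Ioi.1 hxy, and_self, if_true]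
    ring
  have hint_below : IntegrableOn (fun y => g y * freundF3 a1 a2 x y) (Ioc 0 x) :=
    (integrableOn_Ioc_iff_integrableOn_Ioo (f := fun y => g y * freundF3 a1 a2 x y)).2 <|
      IntegrableOn.congr_fun (hg₁.const_mul _) hbelow.symm measurableSet_Ioo
  have hint_above := IntegrableOn.congr_fun (hg₂.const_mul _) habove.symm measurableSet_Ioi
  rw [← Ioc_union_Ioi_eq_Ioi hx.le,
    setIntegral_union Ioc_disjoint_Ioi_same measurableSet_Ioi hint_below hint_above,
    integral_Ioc_eq_integral_Ioo, setIntegral_congr_fun measurableSet_Ioo hbelow,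
    setIntegral_congr_fun measurableSet_Ioi habove, integral_const_mul, integral_const_mul]

theorem integral_Ioi_freundF3 (hs : 0 < a1 + a2) {x : ℝ} (hx : 0 < x) :
    ∫ y in Ioi 0, freundF3 a1 a2 x y = (a1 + a2 * (a1 + a2) * x) * exp (-(a1 + a2) * x) := by
  have h := integral_Ioi_mul_freundF3 (g := fun _ => 1) hx
    (integrableOn_const measure_Ioo_lt_top.ne)
    (by simpa only [one_mul] using integrableOn_exp_mul_Ioi (neg_lt_zero.2 hs) x)
  simp only [one_mul] at h
  rw [h, integral_exp_mul_Ioi (neg_lt_zero.2 hs), neg_div_neg_eq, setIntegral_const,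
    volume_real_Ioo_of_le hx.le, smul_eq_mul]
  field_simp
  ring

theorem integral_Ioi_id_mul_freundF3 (hs : 0 < a1 + a2) {x : ℝ} (hx : 0 < x) :
    ∫ y in Ioi 0, y * freundF3 a1 a2 x y =
      (a1 / (a1 + a2) + a1 * x + a2 * (a1 + a2) / 2 * x ^ 2) * exp (-(a1 + a2) * x) := by
  have hid : ∫ y in Ioo 0 x, y = x ^ 2 / 2 := by
    rw [← integral_Ioc_eq_integral_Ioo, ← intervalIntegral.integral_of_le hx.le, integral_id]
    ring
  rw [integral_Ioi_mul_freundF3 hx (g := fun y => y)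
      (continuous_id.integrableOn_Icc.mono_set Ioo_subset_Icc_self)
      (integrableOn_Ioi_mul_exp_neg_mul hs hx.le),
    hid, integral_Ioi_mul_exp_neg_mul hs hx.le]
  field_simp
  ring

theorem f3E_fst (hs : 0 < a1 + a2) :
    f3E a1 a2 (fun x _ => x) = (a1 + 2 * a2) / (a1 + a2) ^ 2 := by
  calc f3E a1 a2 (fun x _ => x)
      = ∫ x in Ioi 0, (0 + a1 * x + a2 * (a1 + a2) * x ^ 2 + 0 * x ^ 3)
          * exp (-(a1 + a2) * x) :=
        setIntegral_congr_fun measurableSet_Ioi fun x hx => by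
          rw [integral_const_mul, integral_Ioi_freundF3 hs hx]
          ring
    _ = (a1 + 2 * a2) / (a1 + a2) ^ 2 := by
        rw [integral_Ioi_cubic_mul_exp_neg_mul hs]
        field_simp
        ring

theorem f3E_snd (hs : 0 < a1 + a2) :
    f3E a1 a2 (fun _ y => y) = (2 * a1 + a2) / (a1 + a2) ^ 2 := by
  calc f3E a1 a2 (fun _ y => y)
      = ∫ x in Ioi 0, (a1 / (a1 + a2) + a1 * x + a2 * (a1 + a2) / 2 * x ^ 2 + 0 * x ^ 3)
          * exp (-(a1 + a2) * x) :=
        setIntegral_congr_fun measurableSet_Ioi fun x hx => by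
          rw [integral_Ioi_id_mul_freundF3 hs hx]
          ring
    _ = (2 * a1 + a2) / (a1 + a2) ^ 2 := by
        rw [integral_Ioi_cubic_mul_exp_neg_mul hs]
        field_simp
        ring

theorem f3E_mul (hs : 0 < a1 + a2) :
    f3E a1 a2 (fun x y => x * y) = 3 / (a1 + a2) ^ 2 := by
  calc f3E a1 a2 (fun x y => x * y)
      = ∫ x in Ioi 0, (0 + a1 / (a1 + a2) * x + a1 * x ^ 2 + a2 * (a1 + a2) / 2 * x ^ 3)
          * exp (-(a1 + a2) * x) :=
        setIntegral_congr_fun measurableSet_Ioi fun x hx => by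
          simp only [mul_assoc x, integral_const_mul]
          rw [integral_Ioi_id_mul_freundF3 hs hx]
          ring
    _ = 3 / (a1 + a2) ^ 2 := by
        rw [integral_Ioi_cubic_mul_exp_neg_mul hs]
        field_simp
        ring

end

theorem freundF3_covariance (a1 a2 : ℝ) (ha1 : 0 < a1) (ha2 : 0 < a2) :
    f3Cov a1 a2 = (a1 ^ 2 + a1 * a2 + a2 ^ 2) / (a1 + a2) ^ 4 ∧ 0 < f3Cov a1 a2 := by
  have hs : 0 < a1 + a2 := add_pos ha1 ha2
  have hcov : f3Cov a1 a2 = (a1 ^ 2 + a1 * a2 + a2 ^ 2) / (a1 + a2) ^ 4 := by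
    rw [f3Cov, f3E_mul hs, f3E_fst hs, f3E_snd hs]
    field_simp
    ring
  exact ⟨hcov, hcov ▸ by positivity⟩
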